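/- Expressive Completeness of Complemented-pairs for Forest Automata: Let A be a forest automaton, and let φ be an arbitrary live execution property for A. Then there exists a complemented-pairs liveness condition L over A such that lexecs(A, L) = φ. -/

import Mathlib

/- Background formalization: automata, executions, traces, complemented-pairs
   liveness conditions, liveness-preserving simulation relations, etc. -/

open Classical

section AutomatonDefs

/-- An automaton over a type `S` of states and a type `Act` of actions. -/
structure Automaton (S : Type*) (Act : Type*) where
  start : Set S
  start_nonempty : start.Nonempty
  ext : Set Act
  internal : Set Act
  ext_int_disjoint : Disjoint ext internal
  steps : Set (S × Act × S)
  steps_valid : ∀ t ∈ steps, t.2.1 ∈ ext ∪ internal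

variable {S SA SB Act : Type*}

/-- A finite execution fragment `s₀ a₁ s₁ ⋯ a_len s_len`; only the values
`st i` for `i ≤ len` and `act i` for `i < len` are relevant
(`act i` is the action between `st i` and `st (i+1)`). -/
structure FinFrag (S : Type*) (Act : Type*) where
  len : ℕ
  st : ℕ → S
  act : ℕ → Act

def FinFrag.IsFragOf (f : FinFrag S Act) (A : Automaton S Act) : Prop :=
  ∀ i < f.len, (f.st i, f.act i, f.st (i + 1)) ∈ A.steps

def FinFrag.IsExecOf (f : FinFrag S Act) (A : Automaton S Act) : Prop :=
  f.IsFragOf A ∧ f.st 0 ∈ A.start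

def FinFrag.fstate (f : FinFrag S Act) : S := f.st 0

def FinFrag.lstate (f : FinFrag S Act) : S := f.st f.len

/-- A finite execution fragment meets a set `X` of states iff some state along
it lies in `X`. -/
def FinFrag.Meets (f : FinFrag S Act) (X : Set S) : Prop := ∃ i ≤ f.len, f.st i ∈ X

def FinFrag.Prefix (f g : FinFrag S Act) : Prop :=
  f.len ≤ g.len ∧ (∀ i ≤ f.len, f.st i = g.st i) ∧ ∀ i < f.len, f.act i = g.act i

def FinFrag.StrictPrefix (f g : FinFrag S Act) : Prop :=
  f.Prefix g ∧ f.len < g.len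

/-- Equality of finite fragments (up to irrelevant values). -/
def FinFrag.Equiv (f g : FinFrag S Act) : Prop :=
  f.len = g.len ∧ (∀ i ≤ f.len, f.st i = g.st i) ∧ ∀ i < f.len, f.act i = g.act i

/-- The trace of a finite list of actions: the sublist of external actions. -/
noncomputable def ltrace (ext : Set Act) (l : List Act) : List Act :=
  l.filter fun a => decide (a ∈ ext)

/-- The trace of a finite execution fragment. -/
noncomputable def FinFrag.trace (f : FinFrag S Act) (ext : Set Act) : List Act :=
  ltrace ext ((List.range f.len).map f.act)

/-- trace(a) = a if a is external, the empty sequence otherwise. -/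
noncomputable def atrace (ext : Set Act) (a : Act) : List Act :=
  if a ∈ ext then [a] else []

/-- The trace of the segment of actions `b_{j+1} ⋯ b_k` (0-indexed:
`act j, …, act (k-1)`) of an execution with actions `act`. -/
noncomputable def segTrace (ext : Set Act) (act : ℕ → Act) (j k : ℕ) : List Act :=
  ltrace ext ((List.range (k - j)).map fun t => act (j + t))

/-- An infinite execution `s₀ a₁ s₁ a₂ s₂ ⋯` (with `act i` the action between
`st i` and `st (i+1)`). -/
structure InfExec (S : Type*) (Act : Type*) where
  st : ℕ → S
  act : ℕ → Act

def InfExec.IsExecOf (e : InfExec S Act) (A : Automaton S Act) : Prop :=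
  e.st 0 ∈ A.start ∧ ∀ i, (e.st i, e.act i, e.st (i + 1)) ∈ A.steps

/-- The prefix `α|_n` of an infinite execution. -/
def InfExec.take (e : InfExec S Act) (n : ℕ) : FinFrag S Act := ⟨n, e.st, e.act⟩

/-- An infinite execution extends a finite one. -/
def InfExec.Extends (e : InfExec S Act) (f : FinFrag S Act) : Prop :=
  (∀ i ≤ f.len, e.st i = f.st i) ∧ ∀ i < f.len, e.act i = f.act i

/-- `P n` holds for infinitely many `n`. -/
def InfOften (P : ℕ → Prop) : Prop := ∀ n, ∃ m, n ≤ m ∧ P m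

/-- A complemented pair `⟨R, G⟩` of sets of states. -/
structure CPair (S : Type*) where
  R : Set S
  G : Set S

/-- `α ⊨ p`: if `α` contains infinitely many states in `p.R` then it contains
infinitely many states in `p.G`. -/
def InfExec.Sat (e : InfExec S Act) (p : CPair S) : Prop :=
  InfOften (fun n => e.st n ∈ p.R) → InfOften fun n => e.st n ∈ p.G

/-- The live executions of `(A, L)`. -/
def lexecs (A : Automaton S Act) (L : Set (CPair S)) : Set (InfExec S Act) :=
  {e | e.IsExecOf A ∧ ∀ p ∈ L, e.Sat p}

/-- Machine closure: `(A, L)` is a live automaton (equivalently, `L` is a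
complemented-pairs liveness condition over `A`). -/
def IsLivenessCondition (A : Automaton S Act) (L : Set (CPair S)) : Prop :=
  ∀ f : FinFrag S Act, f.IsExecOf A → ∃ e ∈ lexecs A L, e.Extends f

/-- The semantic closure of `L` in `A`. -/
def closL (A : Automaton S Act) (L : Set (CPair S)) : Set (CPair S) :=
  {p | ∀ e ∈ lexecs A L, e.Sat p}

/-- A state is reachable iff it occurs in some execution. -/
def Reachable (A : Automaton S Act) (s : S) : Prop :=
  ∃ f : FinFrag S Act, f.IsExecOf A ∧ ∃ i ≤ f.len, f.st i = s

/-- An invariant is a superset of the reachable states. -/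
def IsAutInvariant (A : Automaton S Act) (I : Set S) : Prop :=
  ∀ s, Reachable A s → s ∈ I

/-- `g[s]` for a relation `g ⊆ states(A) × states(B)`. -/
def gImg (g : Set (SA × SB)) (s : SA) : Set SB := {u | (s, u) ∈ g}

def ImageFinite (g : Set (SA × SB)) : Prop := ∀ s, (gImg g s).Finite

/-- A transition `s →a s'` of `A` is always-silent (w.r.t. `g`, `I_A`, `I_B`). -/
def AlwaysSilent (A : Automaton SA Act) (B : Automaton SB Act)
    (IA : Set SA) (IB : Set SB) (g : Set (SA × SB)) (s : SA) (a : Act) (s' : SA) : Prop :=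
  s ∈ IA ∧ ∀ β : FinFrag SB Act, β.IsFragOf B → β.fstate ∈ gImg g s ∩ IB →
    β.lstate ∈ gImg g s' → β.trace B.ext = atrace A.ext a → β.len = 0

/-- A transition `s →a s'` of `A` is sometimes-silent (w.r.t. `g`, `I_A`, `I_B`). -/
def SometimesSilent (A : Automaton SA Act) (B : Automaton SB Act)
    (IA : Set SA) (IB : Set SB) (g : Set (SA × SB)) (s : SA) (a : Act) (s' : SA) : Prop :=
  s ∈ IA ∧ ∃ β : FinFrag SB Act, β.IsFragOf B ∧ β.fstate ∈ gImg g s ∩ IB ∧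
    β.lstate ∈ gImg g s' ∧ β.trace B.ext = atrace A.ext a ∧ β.len = 0

/-- `(g, h)` is a liveness-preserving forward simulation from `(A, L)` to
`(B, M)` with respect to invariants `I_A`, `I_B`. -/
structure IsLPForwardSim (A : Automaton SA Act) (B : Automaton SB Act)
    (L : Set (CPair SA)) (M : Set (CPair SB)) (IA : Set SA) (IB : Set SB)
    (g : Set (SA × SB)) (h : CPair SB → CPair SA) : Prop where
  h_total : ∀ q ∈ M, h q ∈ closL A L
  start_cond : ∀ s ∈ A.start, ∃ u ∈ B.start, (s, u) ∈ g
  step_cond : ∀ s a s', (s, a, s') ∈ A.steps → s ∈ IA → ∀ u ∈ gImg g s ∩ IB,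
    ∃ β : FinFrag SB Act, β.IsFragOf B ∧ β.fstate = u ∧ β.lstate ∈ gImg g s' ∧
      β.trace B.ext = atrace A.ext a ∧
      ∀ q ∈ M, (β.Meets q.R → s ∈ (h q).R ∨ s' ∈ (h q).R) ∧
        ((s ∈ (h q).G ∨ s' ∈ (h q).G) → β.Meets q.G)
  nonsilent : ∀ e ∈ lexecs A L,
    InfOften fun n => ¬ AlwaysSilent A B IA IB g (e.st n) (e.act n) (e.st (n + 1))

/-- `(g, h)` is a liveness-preserving backward simulation from `(A, L)` to
`(B, M)` with respect to invariants `I_A`, `I_B`. -/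
structure IsLPBackwardSim (A : Automaton SA Act) (B : Automaton SB Act)
    (L : Set (CPair SA)) (M : Set (CPair SB)) (IA : Set SA) (IB : Set SB)
    (g : Set (SA × SB)) (h : CPair SB → CPair SA) : Prop where
  h_total : ∀ q ∈ M, h q ∈ closL A L
  nonempty_cond : ∀ s ∈ IA, (gImg g s ∩ IB).Nonempty
  start_cond : ∀ s ∈ A.start, gImg g s ∩ IB ⊆ B.start
  step_cond : ∀ s a s', (s, a, s') ∈ A.steps → s ∈ IA → ∀ u' ∈ gImg g s' ∩ IB,
    ∃ β : FinFrag SB Act, β.IsFragOf B ∧ β.fstate ∈ gImg g s ∩ IB ∧ β.lstate = u' ∧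
      β.trace B.ext = atrace A.ext a ∧
      ∀ q ∈ M, (β.Meets q.R → s ∈ (h q).R ∨ s' ∈ (h q).R) ∧
        ((s ∈ (h q).G ∨ s' ∈ (h q).G) → β.Meets q.G)
  nonsilent : ∀ e ∈ lexecs A L,
    InfOften fun n => ¬ SometimesSilent A B IA IB g (e.st n) (e.act n) (e.st (n + 1))

/-- Live index mapping from a finite execution `α` of `A` to a finite
execution `β` of `B` with respect to `(R, H)`. -/
structure LiveIndexMapFF (A : Automaton SA Act) (B : Automaton SB Act)
    (R : Set (SA × SB)) (M : Set (CPair SB)) (H : CPair SB → CPair SA)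
    (α : FinFrag SA Act) (β : FinFrag SB Act) (m : ℕ → ℕ) : Prop where
  zero : m 0 = 0
  mono : ∀ i j, i ≤ j → j ≤ α.len → m i ≤ m j
  bound : ∀ i ≤ α.len, m i ≤ β.len
  rel : ∀ i ≤ α.len, (α.st i, β.st (m i)) ∈ R
  tr : ∀ i, 0 < i → i ≤ α.len →
    segTrace B.ext β.act (m (i - 1)) (m i) = atrace A.ext (α.act (i - 1))
  cofinal : ∀ j ≤ β.len, ∃ i ≤ α.len, j ≤ m i
  pairR : ∀ q ∈ M, ∀ i, 0 < i → i ≤ α.len →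
    (∃ j, m (i - 1) ≤ j ∧ j ≤ m i ∧ β.st j ∈ q.R) →
      α.st (i - 1) ∈ (H q).R ∨ α.st i ∈ (H q).R
  pairG : ∀ q ∈ M, ∀ i, 0 < i → i ≤ α.len →
    (α.st (i - 1) ∈ (H q).G ∨ α.st i ∈ (H q).G) →
      ∃ j, m (i - 1) ≤ j ∧ j ≤ m i ∧ β.st j ∈ q.G

/-- Live index mapping from an infinite execution `α` of `A` to an infinite
execution `β` of `B` with respect to `(R, H)`. -/
structure LiveIndexMapII (A : Automaton SA Act) (B : Automaton SB Act)
    (R : Set (SA × SB)) (M : Set (CPair SB)) (H : CPair SB → CPair SA)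
    (α : InfExec SA Act) (β : InfExec SB Act) (m : ℕ → ℕ) : Prop where
  zero : m 0 = 0
  mono : Monotone m
  rel : ∀ i, (α.st i, β.st (m i)) ∈ R
  tr : ∀ i, 0 < i →
    segTrace B.ext β.act (m (i - 1)) (m i) = atrace A.ext (α.act (i - 1))
  cofinal : ∀ j, ∃ i, j ≤ m i
  pairR : ∀ q ∈ M, ∀ i, 0 < i →
    (∃ j, m (i - 1) ≤ j ∧ j ≤ m i ∧ β.st j ∈ q.R) →
      α.st (i - 1) ∈ (H q).R ∨ α.st i ∈ (H q).R
  pairG : ∀ q ∈ M, ∀ i, 0 < i →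
    (α.st (i - 1) ∈ (H q).G ∨ α.st i ∈ (H q).G) →
      ∃ j, m (i - 1) ≤ j ∧ j ≤ m i ∧ β.st j ∈ q.G

/-- The trace of an infinite execution, as a partial sequence: position `n`
holds the `n`-th external action, if it exists. -/
noncomputable def itrace (ext : Set Act) (act : ℕ → Act) : ℕ → Option Act := fun n =>
  if h : ∃ i, act i ∈ ext ∧ {j | j < i ∧ act j ∈ ext}.ncard = n then some (act h.choose)
  else none

/-- The set of traces of a set of infinite executions. -/
noncomputable def tracesOf (ext : Set Act) (Φ : Set (InfExec S Act)) :
    Set (ℕ → Option Act) :=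
  (fun e => itrace ext e.act) '' Φ

/-- `r ⪯ w` for a strict order `lt`. -/
def pLe (lt : CPair S → CPair S → Prop) (r w : CPair S) : Prop := lt r w ∨ r = w

/-- The immediate successors of `r` in `(P, lt)`. -/
def succSet (P : Set (CPair S)) (lt : CPair S → CPair S → Prop) (r : CPair S) :
    Set (CPair S) :=
  {w | w ∈ P ∧ lt r w ∧ ∀ w' ∈ P, pLe lt r w' → lt w' w → r = w'}

/-- No state occurs infinitely often along any execution in `φ`. -/
def NoInfRep (φ : Set (InfExec S Act)) : Prop :=
  ∀ e ∈ φ, ∀ s : S, {n | e.st n = s}.Finite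

/-- `γ ⊴ α`: some suffix of `γ` maps into `α` as in the robustness definition. -/
def Subsumes (γ α : InfExec S Act) : Prop :=
  ∃ k : ℕ, ∃ m : ℕ → ℕ, (∀ i, α.st (m i) = γ.st (k + i)) ∧ ∀ i, {j | m j = i}.Finite

/-- A live execution property for `A`. -/
def IsLiveExecProperty (A : Automaton S Act) (φ : Set (InfExec S Act)) : Prop :=
  (∀ e ∈ φ, e.IsExecOf A) ∧
    ∀ f : FinFrag S Act, f.IsExecOf A → ∃ e ∈ φ, e.Extends f

/-- `φ` is robust for `A`. -/
def Robust (A : Automaton S Act) (φ : Set (InfExec S Act)) : Prop :=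
  ∀ γ α : InfExec S Act, γ.IsExecOf A → α.IsExecOf A → Subsumes γ α → γ ∈ φ → α ∈ φ

/-- `A` is a forest automaton: each reachable state is the last state of
exactly one finite execution. -/
def IsForest (A : Automaton S Act) : Prop :=
  ∀ f g : FinFrag S Act, f.IsExecOf A → g.IsExecOf A → f.lstate = g.lstate → f.Equiv g

/-- A (finite or infinite) execution, with length in `ℕ∞`. -/
structure ExecE (S : Type*) (Act : Type*) where
  len : ℕ∞
  st : ℕ → S
  act : ℕ → Act

def ExecE.IsExecOf (e : ExecE S Act) (A : Automaton S Act) : Prop :=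
  e.st 0 ∈ A.start ∧ ∀ i : ℕ, (i : ℕ∞) < e.len → (e.st i, e.act i, e.st (i + 1)) ∈ A.steps

/-- Node of the digraph induced by `α`, `b = (g,h)`, `I_B`, `L`, `M`. -/
def DNode (IB : Set SB) (g : Set (SA × SB)) (α : ExecE SA Act) (x : SB × ℕ) : Prop :=
  (x.2 : ℕ∞) ≤ α.len ∧ x.1 ∈ gImg g (α.st x.2) ∩ IB

/-- Edge of the digraph induced by `α`, `b = (g,h)`, `I_B`, `L`, `M`. -/
def DEdge (A : Automaton SA Act) (B : Automaton SB Act) (IB : Set SB)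
    (g : Set (SA × SB)) (M : Set (CPair SB)) (h : CPair SB → CPair SA)
    (α : ExecE SA Act) (x y : SB × ℕ) : Prop :=
  DNode IB g α x ∧ DNode IB g α y ∧ y.2 = x.2 + 1 ∧
  ∃ β : FinFrag SB Act, β.IsFragOf B ∧ β.fstate = x.1 ∧ β.lstate = y.1 ∧
    β.trace B.ext = atrace A.ext (α.act x.2) ∧
    ∀ q ∈ M, (β.Meets q.R → α.st x.2 ∈ (h q).R ∨ α.st (x.2 + 1) ∈ (h q).R) ∧
      ((α.st x.2 ∈ (h q).G ∨ α.st (x.2 + 1) ∈ (h q).G) → β.Meets q.G)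

/-- Root of the induced digraph: a node with no incoming edge. -/
def DRoot (A : Automaton SA Act) (B : Automaton SB Act) (IB : Set SB)
    (g : Set (SA × SB)) (M : Set (CPair SB)) (h : CPair SB → CPair SA)
    (α : ExecE SA Act) (x : SB × ℕ) : Prop :=
  DNode IB g α x ∧ ¬ ∃ y, DEdge A B IB g M h α y x

end AutomatonDefs

/-!
In a forest automaton two distinct infinite executions share only finitely many states, since a
shared state determines the whole prefix leading to it. Hence for an execution `γ ∉ φ` the pair
`⟨states(γ), ∅⟩` is violated by `γ` itself and satisfied by every other execution. The set of all
these pairs cuts out exactly `φ`, and machine closure is inherited from the liveness of `φ`.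
-/

namespace InfExec

variable {S Act : Type*}

lemma ext_of_forall {e γ : InfExec S Act} (hst : ∀ i, e.st i = γ.st i)
    (hact : ∀ i, e.act i = γ.act i) : e = γ := by
  cases e
  cases γ
  simp only [mk.injEq]
  exact ⟨funext hst, funext hact⟩

lemma IsExecOf.take {A : Automaton S Act} {e : InfExec S Act} (he : e.IsExecOf A) (n : ℕ) :
    (e.take n).IsExecOf A :=
  ⟨fun i _ => he.2 i, he.1⟩

def rejectingPair (γ : InfExec S Act) : CPair S := ⟨Set.range γ.st, ∅⟩

lemma sat_rejectingPair_iff (e γ : InfExec S Act) :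
    e.Sat γ.rejectingPair ↔ ¬ InfOften fun n => e.st n ∈ Set.range γ.st := by
  simp [Sat, rejectingPair, InfOften]

lemma not_sat_rejectingPair_self (e : InfExec S Act) : ¬ e.Sat e.rejectingPair := by
  rw [sat_rejectingPair_iff, not_not]
  exact fun n => ⟨n, le_rfl, n, rfl⟩

end InfExec

section

open InfExec

variable {S Act : Type*}

lemma IsForest.eq_of_infOften_mem_range {A : Automaton S Act} (hA : IsForest A)
    {e γ : InfExec S Act} (he : e.IsExecOf A) (hγ : γ.IsExecOf A)
    (h : InfOften fun n => e.st n ∈ Set.range γ.st) : e = γ := by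
  have agree : ∀ i, e.st i = γ.st i ∧ e.act i = γ.act i := by
    intro i
    obtain ⟨m, him, k, hk⟩ := h (i + 1)
    obtain ⟨-, hst, hact⟩ := hA _ _ (he.take m) (hγ.take k) hk.symm
    exact ⟨hst i (show i ≤ m by omega), hact i (show i < m by omega)⟩
  exact ext_of_forall (fun i => (agree i).1) (fun i => (agree i).2)

def rejectingPairs (A : Automaton S Act) (φ : Set (InfExec S Act)) : Set (CPair S) :=
  rejectingPair '' {γ | γ.IsExecOf A ∧ γ ∉ φ}

lemma lexecs_rejectingPairs {A : Automaton S Act} (hA : IsForest A) {φ : Set (InfExec S Act)}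
    (hφ : ∀ e ∈ φ, e.IsExecOf A) : lexecs A (rejectingPairs A φ) = φ := by
  ext e
  constructor
  · rintro ⟨he, hsat⟩
    by_contra heφ
    exact not_sat_rejectingPair_self e (hsat _ ⟨e, ⟨he, heφ⟩, rfl⟩)
  · intro heφ
    refine ⟨hφ e heφ, ?_⟩
    rintro _ ⟨γ, ⟨hγ, hγφ⟩, rfl⟩
    rw [sat_rejectingPair_iff]
    intro hinf
    rw [← hA.eq_of_infOften_mem_range (hφ e heφ) hγ hinf] at hγφ
    exact hγφ heφ

lemma IsLiveExecProperty.isLivenessCondition {A : Automaton S Act} {φ : Set (InfExec S Act)}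
    (hφ : IsLiveExecProperty A φ) {L : Set (CPair S)} (hL : lexecs A L = φ) :
    IsLivenessCondition A L := by
  rw [IsLivenessCondition, hL]
  exact hφ.2

end

/-- Expressive Completeness of Complemented-pairs for Forest
Automata (execution version). -/
theorem stmt17 {S Act : Type*} (A : Automaton S Act) (hA : IsForest A)
    (φ : Set (InfExec S Act)) (hφ : IsLiveExecProperty A φ) :
    ∃ L : Set (CPair S), IsLivenessCondition A L ∧ lexecs A L = φ := by
  have hL := lexecs_rejectingPairs hA hφ.1
  exact ⟨rejectingPairs A φ, hφ.isLivenessCondition hL, hL⟩
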